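/- arXiv:2502.09406 — 3 statements merged into one kernel-verified Lean document; each statement's English description precedes it below -/
import Mathlib

section
/- Let d ≥ 2, α ∈ (0, d-1), ℓ = (d-1)/2, t = ℓ - α/2, a_k = ∏_{j=1}^{k-1}(j+ℓ-t), b_k = ∏_{j=1}^{k-1}(j+ℓ+t). If for some k ≥ 2 one has b_k/a_k ≥ 1 + 2t(d+3)(k-1)/((2k+d-1)(1+ℓ-t)), then b_{k+1}/a_{k+1} ≥ 1 + 2t(d+3)k/((2k+d+1)(1+ℓ-t)). -/
lemma key_ineq_stmt10 (ℓ t K : ℝ) (ht0 : 0 < t) (htℓ : t < ℓ) (hK : 2 ≤ K)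
    (hℓ : 0 < ℓ) :
    1 + 2 * t * (2 * ℓ + 4) * K / ((2 * (K + ℓ + 1)) * (1 + ℓ - t)) ≤
      (1 + 2 * t * (2 * ℓ + 4) * (K - 1) / ((2 * (K + ℓ)) * (1 + ℓ - t))) *
        ((K + ℓ + t) / (K + ℓ - t)) := by
  have hs : 0 < 1 + ℓ - t := by linarith
  have hm : 0 < K + ℓ := by linarith
  have hm1 : 0 < K + ℓ + 1 := by linarith
  have hmt : 0 < K + ℓ - t := by linarith
  have hmt' : 0 < K + ℓ + t := by linarith
  set A := 1 + 2 * t * (2 * ℓ + 4) * K / ((2 * (K + ℓ + 1)) * (1 + ℓ - t)) with hA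
  set X := 1 + 2 * t * (2 * ℓ + 4) * (K - 1) / ((2 * (K + ℓ)) * (1 + ℓ - t)) with hX
  have h : X * (K + ℓ + t) - A * (K + ℓ - t) =
      (4 * t * (K - 1) * ((K + ℓ) * ((ℓ + 1) + t * (2 * ℓ + 3)) + (ℓ + 2) * t)) /
        (2 * (K + ℓ) * (K + ℓ + 1) * (1 + ℓ - t)) := by
    rw [hA, hX]
    field_simp
    ring
  have hnum : 0 ≤ 4 * t * (K - 1) * ((K + ℓ) * ((ℓ + 1) + t * (2 * ℓ + 3)) + (ℓ + 2) * t) := by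
    have h1 : 0 < (K + ℓ) * ((ℓ + 1) + t * (2 * ℓ + 3)) := by
      apply mul_pos hm; nlinarith
    have h2 : 0 < (ℓ + 2) * t := by positivity
    have h3 : 0 ≤ K - 1 := by linarith
    have h4 : 0 ≤ 4 * t * (K - 1) := by positivity
    nlinarith
  have hden : 0 < 2 * (K + ℓ) * (K + ℓ + 1) * (1 + ℓ - t) := by positivity
  have hmain : A * (K + ℓ - t) ≤ X * (K + ℓ + t) := by
    have := div_nonneg hnum hden.le
    linarith [h ▸ this]
  calc A = A * (K + ℓ - t) / (K + ℓ - t) := by field_simp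
    _ ≤ X * (K + ℓ + t) / (K + ℓ - t) := by
        exact div_le_div_of_nonneg_right hmain hmt.le
    _ = X * ((K + ℓ + t) / (K + ℓ - t)) := by rw [mul_div_assoc]

theorem stmt_10 (d : ℕ) (hd : 2 ≤ d) (α : ℝ) (hα0 : 0 < α) (hαd : α < (d : ℝ) - 1) :
    let ℓ : ℝ := ((d : ℝ) - 1) / 2
    let t : ℝ := ℓ - α / 2
    let a : ℕ → ℝ := fun k => ∏ j ∈ Finset.Icc 1 (k - 1), ((j : ℝ) + ℓ - t)
    let b : ℕ → ℝ := fun k => ∏ j ∈ Finset.Icc 1 (k - 1), ((j : ℝ) + ℓ + t)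
    ∀ k : ℕ, 2 ≤ k →
      b k / a k ≥ 1 + 2 * t * ((d : ℝ) + 3) * ((k : ℝ) - 1) /
          ((2 * (k : ℝ) + d - 1) * (1 + ℓ - t)) →
      b (k + 1) / a (k + 1) ≥ 1 + 2 * t * ((d : ℝ) + 3) * (k : ℝ) /
          ((2 * (k : ℝ) + d + 1) * (1 + ℓ - t)) := by
  intro ℓ t a b k hk hrec
  obtain ⟨n, rfl⟩ : ∃ n, k = n + 2 := ⟨k - 2, by omega⟩
  have hℓ : ℓ = ((d : ℝ) - 1) / 2 := rfl
  have ht : t = ℓ - α / 2 := rfl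
  have hd2 : (2 : ℝ) ≤ (d : ℝ) := by exact_mod_cast hd
  have hℓpos : 0 < ℓ := by rw [hℓ]; linarith
  have ht0 : 0 < t := by rw [ht, hℓ]; linarith
  have htℓ : t < ℓ := by rw [ht]; linarith
  set K : ℝ := ((n + 2 : ℕ) : ℝ) with hKdef
  have hKval : K = (n : ℝ) + 2 := by push_cast [hKdef]; ring
  have hK : 2 ≤ K := by rw [hKval]; have : (0:ℝ) ≤ (n:ℝ) := Nat.cast_nonneg n; linarith
  -- product recursions
  have hb : b (n + 2 + 1) = b (n + 2) * (K + ℓ + t) := by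
    show (∏ j ∈ Finset.Icc 1 (n + 1 + 1), ((j : ℝ) + ℓ + t)) = _
    rw [Finset.prod_Icc_succ_top (by omega : 1 ≤ n + 1 + 1)]
    congr 1
  have ha : a (n + 2 + 1) = a (n + 2) * (K + ℓ - t) := by
    show (∏ j ∈ Finset.Icc 1 (n + 1 + 1), ((j : ℝ) + ℓ - t)) = _
    rw [Finset.prod_Icc_succ_top (by omega : 1 ≤ n + 1 + 1)]
    congr 1
  have hstep : b (n + 2 + 1) / a (n + 2 + 1) = (b (n + 2) / a (n + 2)) * ((K + ℓ + t) / (K + ℓ - t)) := by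
    rw [hb, ha, mul_div_mul_comm]
  have hmt : 0 < K + ℓ - t := by linarith
  have hratio : 0 ≤ (K + ℓ + t) / (K + ℓ - t) := by
    apply div_nonneg <;> linarith
  have hrec' : 1 + 2 * t * (2 * ℓ + 4) * (K - 1) / ((2 * (K + ℓ)) * (1 + ℓ - t)) ≤
      b (n + 2) / a (n + 2) := by
    have e : 1 + 2 * t * ((d : ℝ) + 3) * (K - 1) / ((2 * K + d - 1) * (1 + ℓ - t)) =
        1 + 2 * t * (2 * ℓ + 4) * (K - 1) / ((2 * (K + ℓ)) * (1 + ℓ - t)) := by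
      rw [hℓ]; ring_nf
    exact e ▸ hrec
  have key := key_ineq_stmt10 ℓ t K ht0 htℓ hK hℓpos
  have hfinal : 1 + 2 * t * (2 * ℓ + 4) * K / ((2 * (K + ℓ + 1)) * (1 + ℓ - t)) ≤
      b (n + 2 + 1) / a (n + 2 + 1) := by
    rw [hstep]
    calc 1 + 2 * t * (2 * ℓ + 4) * K / ((2 * (K + ℓ + 1)) * (1 + ℓ - t))
        ≤ (1 + 2 * t * (2 * ℓ + 4) * (K - 1) / ((2 * (K + ℓ)) * (1 + ℓ - t))) *
            ((K + ℓ + t) / (K + ℓ - t)) := key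
      _ ≤ (b (n + 2) / a (n + 2)) * ((K + ℓ + t) / (K + ℓ - t)) :=
          mul_le_mul_of_nonneg_right hrec' hratio
  have e2 : 1 + 2 * t * ((d : ℝ) + 3) * K / ((2 * K + d + 1) * (1 + ℓ - t)) =
      1 + 2 * t * (2 * ℓ + 4) * K / ((2 * (K + ℓ + 1)) * (1 + ℓ - t)) := by
    rw [hℓ]; ring_nf
  exact e2 ▸ hfinal
end

section
/- Let d ≥ 2, α ∈ (0, d-1), and define A_k = (1 - a_k/b_k)/((k-1)(k+d-1)) with a_k = ∏_{j=1}^{k-1}(j+ℓ-t), b_k = ∏_{j=1}^{k-1}(j+ℓ+t), ℓ = (d-1)/2, t = ℓ - α/2. Then the sequence (A_k)_{k≥2} is strictly decreasing: A_k > A_{k+1} for all k ≥ 2. -/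
-- positivity of the products
lemma prod_pos_aux (ℓ t : ℝ) (h : 0 < 1 + ℓ - t) (m : ℕ) :
    0 < ∏ j ∈ Finset.Icc 1 m, ((j : ℝ) + ℓ - t) := by
  apply Finset.prod_pos
  intro j hj
  have h1 : 1 ≤ j := (Finset.mem_Icc.mp hj).1
  have : (1:ℝ) ≤ (j:ℝ) := by exact_mod_cast h1
  linarith

lemma prod_pos_aux' (ℓ t : ℝ) (h : 0 < 1 + ℓ + t) (m : ℕ) :
    0 < ∏ j ∈ Finset.Icc 1 m, ((j : ℝ) + ℓ + t) := by
  apply Finset.prod_pos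
  intro j hj
  have h1 : 1 ≤ j := (Finset.mem_Icc.mp hj).1
  have : (1:ℝ) ≤ (j:ℝ) := by exact_mod_cast h1
  linarith

lemma key_aux (ℓ t : ℝ) (ht0 : 0 < t) (htℓ : t < ℓ) :
    ∀ k : ℕ, 2 ≤ k →
      t * (∏ j ∈ Finset.Icc 1 (k-1), ((j:ℝ)+ℓ-t)) * ((k:ℝ)-1) * ((k:ℝ)+2*ℓ)
      < ((∏ j ∈ Finset.Icc 1 (k-1), ((j:ℝ)+ℓ+t)) - ∏ j ∈ Finset.Icc 1 (k-1), ((j:ℝ)+ℓ-t))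
          * ((k:ℝ)+ℓ) * ((k:ℝ)+ℓ+t) := by
  have hℓ : 0 < ℓ := lt_trans ht0 htℓ
  intro k hk
  induction k, hk using Nat.le_induction with
  | base =>
      simp only [show (2:ℕ)-1 = 1 from rfl, Finset.Icc_self, Finset.prod_singleton]
      push_cast
      nlinarith [mul_pos ht0 hℓ, sq_nonneg t]
  | succ k hk IH =>
      have hk1 : k - 1 + 1 = k := by omega
      have ha : 0 < ∏ j ∈ Finset.Icc 1 (k-1), ((j:ℝ)+ℓ-t) :=
        prod_pos_aux ℓ t (by linarith) _
      have hb : 0 < ∏ j ∈ Finset.Icc 1 (k-1), ((j:ℝ)+ℓ+t) :=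
        prod_pos_aux' ℓ t (by linarith) _
      set A := ∏ j ∈ Finset.Icc 1 (k-1), ((j:ℝ)+ℓ-t) with hA
      set B := ∏ j ∈ Finset.Icc 1 (k-1), ((j:ℝ)+ℓ+t) with hB
      have ea : ∏ j ∈ Finset.Icc 1 (k+1-1), ((j:ℝ)+ℓ-t) = A * ((k:ℝ)+ℓ-t) := by
        rw [show k + 1 - 1 = (k-1) + 1 by omega, Finset.prod_Icc_succ_top (by omega), hA, hk1]
      have eb : ∏ j ∈ Finset.Icc 1 (k+1-1), ((j:ℝ)+ℓ+t) = B * ((k:ℝ)+ℓ+t) := by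
        rw [show k + 1 - 1 = (k-1) + 1 by omega, Finset.prod_Icc_succ_top (by omega), hB, hk1]
      rw [ea, eb]
      push_cast
      set K := (k:ℝ) with hK
      have hK2 : (2:ℝ) ≤ K := by rw [hK]; exact_mod_cast hk
      -- step1 : (B-A)(K+ℓ+t)(K+ℓ) + 2tA(K+ℓ) > tAK(K+2ℓ+1)
      have step1 : t * A * K * (K + 2*ℓ + 1)
          < (B - A) * (K+ℓ+t) * (K+ℓ) + 2*t*A*(K+ℓ) := by nlinarith [IH]
      -- step2 : (K+1+ℓ)(K+1+ℓ+t) > (K+ℓ)(K+ℓ-t)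
      have step2 : (K+ℓ)*(K+ℓ-t) < (K+1+ℓ)*(K+1+ℓ+t) := by nlinarith
      have hpos1 : 0 < (K+1+ℓ)*(K+1+ℓ+t) := by nlinarith
      have hpos2 : 0 < t * A * K * (K + 2*ℓ + 1) := by positivity
      have hKℓ : 0 < K + ℓ := by linarith
      have h1 := mul_lt_mul_of_pos_right step1 hpos1
      have h2 := mul_lt_mul_of_pos_left step2 hpos2
      -- chain, multiplied by (K+ℓ)
      have main : t * (A * (K+ℓ-t)) * K * (K + 1 + 2*ℓ) * (K+ℓ)
          < (B * (K+ℓ+t) - A * (K+ℓ-t)) * (K+1+ℓ) * (K+1+ℓ+t) * (K+ℓ) := by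
        calc t * (A * (K+ℓ-t)) * K * (K + 1 + 2*ℓ) * (K+ℓ)
            = t * A * K * (K + 2*ℓ + 1) * ((K+ℓ)*(K+ℓ-t)) := by ring
          _ < t * A * K * (K + 2*ℓ + 1) * ((K+1+ℓ)*(K+1+ℓ+t)) := h2
          _ = t * A * K * (K + 2*ℓ + 1) * ((K+1+ℓ)*(K+1+ℓ+t)) := rfl
          _ < ((B - A) * (K+ℓ+t) * (K+ℓ) + 2*t*A*(K+ℓ)) * ((K+1+ℓ)*(K+1+ℓ+t)) := h1
          _ = (B * (K+ℓ+t) - A * (K+ℓ-t)) * (K+1+ℓ) * (K+1+ℓ+t) * (K+ℓ) := by ring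
      apply lt_of_mul_lt_mul_right ?_ (le_of_lt hKℓ)
      calc t * (A * (K+ℓ-t)) * (K+1-1) * (K+1+2*ℓ) * (K+ℓ)
          = t * (A * (K+ℓ-t)) * K * (K + 1 + 2*ℓ) * (K+ℓ) := by ring
        _ < (B * (K+ℓ+t) - A * (K+ℓ-t)) * (K+1+ℓ) * (K+1+ℓ+t) * (K+ℓ) := main

theorem stmt_11 (d : ℕ) (hd : 2 ≤ d) (α : ℝ) (hα0 : 0 < α) (hαd : α < (d : ℝ) - 1) :
    let ℓ : ℝ := ((d : ℝ) - 1) / 2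
    let t : ℝ := ℓ - α / 2
    let a : ℕ → ℝ := fun k => ∏ j ∈ Finset.Icc 1 (k - 1), ((j : ℝ) + ℓ - t)
    let b : ℕ → ℝ := fun k => ∏ j ∈ Finset.Icc 1 (k - 1), ((j : ℝ) + ℓ + t)
    let A : ℕ → ℝ := fun k => (1 - a k / b k) / (((k : ℝ) - 1) * ((k : ℝ) + d - 1))
    ∀ k : ℕ, 2 ≤ k → A (k + 1) < A k := by
  intro ℓ t a b A k hk
  have hd2 : (2:ℝ) ≤ (d:ℝ) := by exact_mod_cast hd
  have hℓdef : ℓ = ((d:ℝ)-1)/2 := rfl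
  have htdef : t = ℓ - α/2 := rfl
  have ht0 : 0 < t := by rw [htdef, hℓdef]; linarith
  have htℓ : t < ℓ := by rw [htdef]; linarith
  have hℓ0 : 0 < ℓ := lt_trans ht0 htℓ
  have hdℓ : (d:ℝ) = 2*ℓ + 1 := by rw [hℓdef]; ring
  have hK2 : (2:ℝ) ≤ (k:ℝ) := by exact_mod_cast hk
  have hak : 0 < a k := prod_pos_aux ℓ t (by linarith) _
  have hbk : 0 < b k := prod_pos_aux' ℓ t (by linarith) _
  have hbk1 : 0 < b (k+1) := prod_pos_aux' ℓ t (by linarith) _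
  have ea : a (k+1) = a k * ((k:ℝ)+ℓ-t) := by
    show (∏ j ∈ Finset.Icc 1 (k+1-1), ((j:ℝ)+ℓ-t))
        = (∏ j ∈ Finset.Icc 1 (k-1), ((j:ℝ)+ℓ-t)) * ((k:ℝ)+ℓ-t)
    rw [show k+1-1 = (k-1)+1 by omega, Finset.prod_Icc_succ_top (by omega),
      show k-1+1 = k by omega]
  have eb : b (k+1) = b k * ((k:ℝ)+ℓ+t) := by
    show (∏ j ∈ Finset.Icc 1 (k+1-1), ((j:ℝ)+ℓ+t))
        = (∏ j ∈ Finset.Icc 1 (k-1), ((j:ℝ)+ℓ+t)) * ((k:ℝ)+ℓ+t)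
    rw [show k+1-1 = (k-1)+1 by omega, Finset.prod_Icc_succ_top (by omega),
      show k-1+1 = k by omega]
  have key := key_aux ℓ t ht0 htℓ k hk
  have e1 : 1 - a k / b k = (b k - a k) / b k := by field_simp
  have e2 : 1 - a (k+1) / b (k+1) = (b (k+1) - a (k+1)) / b (k+1) := by field_simp
  have hden1 : 0 < ((k:ℝ) - 1) * ((k:ℝ) + (d:ℝ) - 1) := by nlinarith
  have hden2 : 0 < (((k+1:ℕ):ℝ) - 1) * (((k+1:ℕ):ℝ) + (d:ℝ) - 1) := by push_cast; nlinarith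
  show (1 - a (k+1) / b (k+1)) / ((((k+1:ℕ):ℝ) - 1) * (((k+1:ℕ):ℝ) + (d:ℝ) - 1)) <
      (1 - a k / b k) / (((k:ℝ) - 1) * ((k:ℝ) + (d:ℝ) - 1))
  rw [e1, e2, div_div _ (b (k+1)) _, div_div _ (b k) _,
    div_lt_div_iff₀ (mul_pos hbk1 hden2) (mul_pos hbk hden1)]
  rw [ea, eb, hdℓ]
  push_cast
  nlinarith [mul_lt_mul_of_pos_left key hbk, mul_pos hbk hak, sq_nonneg ((k:ℝ)+ℓ)]
end

section
/- Nonexistence of mass escape: let (E_k) be sets in ℝ^d with |E_k| = V, sup_k ∫_{E_k}∫_{E_k} |x-y|^β dx dy ≤ C < ∞ for some β > 0, and E_k → E_0 in L¹_loc with |E_0| = V_0 > 0. Then V_0 = V. (Proof idea: if V_0 < V, fix R_0 with |E_0 ∩ B_{R_0}| ≥ V_0/2; for every R > R_0 eventually |E_k \ B_R| ≥ (V - V_0)/2, and the cross-interaction ∫_{E_k ∩ B_{R_0}}∫_{E_k \ B_R} |x-y|^β ≥ (R - R_0)^β V_0 (V-V_0)/8 → ∞, contradiction.) -/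
open MeasureTheory

theorem stmt_17 (d : ℕ) (hd : 1 ≤ d) (β V V₀ C : ℝ)
    (hβ : 0 < β) (hV : 0 < V) (hC : 0 < C)
    (E : ℕ → Set (EuclideanSpace ℝ (Fin d))) (E₀ : Set (EuclideanSpace ℝ (Fin d)))
    (hmeas : ∀ k, MeasurableSet (E k)) (hmeas0 : MeasurableSet E₀)
    (hvol : ∀ k, volume (E k) = ENNReal.ofReal V)
    (henergy : ∀ k, (∫⁻ x in E k, ∫⁻ y in E k, ENNReal.ofReal (‖x - y‖ ^ β)) ≤
        ENNReal.ofReal C)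
    (hconv : ∀ R : ℝ, 0 < R →
      Filter.Tendsto
        (fun k => (volume (symmDiff (E k) E₀ ∩ Metric.ball 0 R)).toReal)
        Filter.atTop (nhds 0))
    (hvol0 : volume E₀ = ENNReal.ofReal V₀)
    (hV0pos : 0 < V₀) (hV0le : V₀ ≤ V) :
    V₀ = V := by
  by_contra hne
  have hlt : V₀ < V := lt_of_le_of_ne hV0le hne
  set ε : ℝ := V - V₀ with hε
  have hεpos : 0 < ε := by simp only [hε]; linarith
  -- Step 1: find R₀ capturing at least half the mass of E₀
  have hUnion : (⋃ n : ℕ, (E₀ ∩ Metric.ball 0 (n : ℝ))) = E₀ := by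
    rw [← Set.inter_iUnion]
    have huniv : (⋃ n : ℕ, Metric.ball (0 : EuclideanSpace ℝ (Fin d)) (n : ℝ)) = Set.univ := by
      ext x
      simp only [Set.mem_iUnion, Metric.mem_ball, Set.mem_univ, iff_true]
      obtain ⟨n, hn⟩ := exists_nat_gt (dist x 0)
      exact ⟨n, hn⟩
    rw [huniv, Set.inter_univ]
  have hmono : Monotone (fun n : ℕ => E₀ ∩ Metric.ball (0 : EuclideanSpace ℝ (Fin d)) (n : ℝ)) := by
    intro m n hmn
    exact Set.inter_subset_inter_right _ (Metric.ball_subset_ball (by exact_mod_cast hmn))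
  have htend : Filter.Tendsto (fun n : ℕ => volume (E₀ ∩ Metric.ball 0 (n : ℝ)))
      Filter.atTop (nhds (volume E₀)) := by
    have h := tendsto_measure_iUnion_atTop (μ := volume) hmono
    rwa [hUnion] at h
  have h2 : ENNReal.ofReal (V₀ / 2) < volume E₀ := by
    rw [hvol0]
    exact (ENNReal.ofReal_lt_ofReal_iff hV0pos).2 (by linarith)
  obtain ⟨n₀, hn₀⟩ := (htend.eventually (lt_mem_nhds h2)).exists
  set R₀ : ℝ := max 1 (n₀ : ℝ) with hR₀
  have hR₀pos : (0 : ℝ) < R₀ := lt_of_lt_of_le one_pos (le_max_left _ _)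
  have hE₀B₀ : ENNReal.ofReal (V₀ / 2) < volume (E₀ ∩ Metric.ball 0 R₀) :=
    lt_of_lt_of_le hn₀ (measure_mono (Set.inter_subset_inter_right _
      (Metric.ball_subset_ball (le_max_right _ _))))
  -- Step 2: choose T and R
  set M : ℝ := C / ((ε / 2) * (V₀ / 4)) with hM
  have hMpos : 0 < M := by positivity
  set T : ℝ := M ^ (1 / β) + 1 with hT
  have hMrn : (0 : ℝ) ≤ M ^ (1 / β) := Real.rpow_nonneg hMpos.le _
  have hTpos : 0 < T := by simp only [hT]; linarith
  have hTβ : M < T ^ β := by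
    have h1 : (M ^ (1 / β)) ^ β < T ^ β :=
      Real.rpow_lt_rpow hMrn (lt_add_one _) hβ
    calc M = (M ^ (1 / β)) ^ β := by
            rw [← Real.rpow_mul hMpos.le, one_div, inv_mul_cancel₀ hβ.ne', Real.rpow_one]
      _ < T ^ β := h1
  set R : ℝ := R₀ + T with hR
  have hRpos : 0 < R := by positivity
  -- Step 3: eventual mass near the origin
  have hA : ∀ᶠ k in Filter.atTop,
      ENNReal.ofReal (V₀ / 4) ≤ volume (E k ∩ Metric.ball 0 R₀) := by
    have hsmall := (hconv R₀ hR₀pos).eventually (gt_mem_nhds (show (0 : ℝ) < V₀ / 4 by linarith))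
    filter_upwards [hsmall] with k hk
    by_contra hcon
    push_neg at hcon
    have hfin : volume (symmDiff (E k) E₀ ∩ Metric.ball 0 R₀) ≠ ⊤ :=
      (lt_of_le_of_lt (measure_mono Set.inter_subset_right) measure_ball_lt_top).ne
    have hsd : volume (symmDiff (E k) E₀ ∩ Metric.ball 0 R₀) < ENNReal.ofReal (V₀ / 4) :=
      (ENNReal.lt_ofReal_iff_toReal_lt hfin).2 hk
    have hsub : E₀ ∩ Metric.ball 0 R₀ ⊆
        (E k ∩ Metric.ball 0 R₀) ∪ (symmDiff (E k) E₀ ∩ Metric.ball 0 R₀) := by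
      intro x hx
      by_cases hxk : x ∈ E k
      · exact Or.inl ⟨hxk, hx.2⟩
      · exact Or.inr ⟨Set.mem_symmDiff.mpr (Or.inr ⟨hx.1, hxk⟩), hx.2⟩
    have hchain : ENNReal.ofReal (V₀ / 2) < ENNReal.ofReal (V₀ / 4) + ENNReal.ofReal (V₀ / 4) :=
      lt_of_lt_of_le hE₀B₀ (((measure_mono hsub).trans (measure_union_le _ _)).trans
        (add_le_add hcon.le hsd.le))
    rw [← ENNReal.ofReal_add (by linarith) (by linarith)] at hchain
    have : V₀ / 2 < V₀ / 4 + V₀ / 4 :=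
      (ENNReal.ofReal_lt_ofReal_iff_of_nonneg (by linarith)).1 hchain
    linarith
  -- Step 4: eventual mass far away
  have hB : ∀ᶠ k in Filter.atTop,
      ENNReal.ofReal (ε / 2) ≤ volume (E k \ Metric.ball 0 R) := by
    have hsmall := (hconv R hRpos).eventually (gt_mem_nhds (show (0 : ℝ) < ε / 2 by linarith))
    filter_upwards [hsmall] with k hk
    by_contra hcon
    push_neg at hcon
    have hfin : volume (symmDiff (E k) E₀ ∩ Metric.ball 0 R) ≠ ⊤ :=
      (lt_of_le_of_lt (measure_mono Set.inter_subset_right) measure_ball_lt_top).ne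
    have hsd : volume (symmDiff (E k) E₀ ∩ Metric.ball 0 R) < ENNReal.ofReal (ε / 2) :=
      (ENNReal.lt_ofReal_iff_toReal_lt hfin).2 hk
    have hsub : E k ∩ Metric.ball 0 R ⊆
        (E₀ ∩ Metric.ball 0 R) ∪ (symmDiff (E k) E₀ ∩ Metric.ball 0 R) := by
      intro x hx
      by_cases hx0 : x ∈ E₀
      · exact Or.inl ⟨hx0, hx.2⟩
      · exact Or.inr ⟨Set.mem_symmDiff.mpr (Or.inl ⟨hx.1, hx0⟩), hx.2⟩
    have hsplit : volume (E k) = volume (E k ∩ Metric.ball 0 R) + volume (E k \ Metric.ball 0 R) :=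
      (measure_inter_add_diff _ measurableSet_ball).symm
    have hEB : volume (E k ∩ Metric.ball 0 R) ≤ ENNReal.ofReal V₀ + ENNReal.ofReal (ε / 2) := by
      refine ((measure_mono hsub).trans (measure_union_le _ _)).trans ?_
      exact add_le_add ((measure_mono Set.inter_subset_left).trans hvol0.le) hsd.le
    have hchain : ENNReal.ofReal V <
        (ENNReal.ofReal V₀ + ENNReal.ofReal (ε / 2)) + ENNReal.ofReal (ε / 2) := by
      calc ENNReal.ofReal V = volume (E k) := (hvol k).symm
        _ = volume (E k ∩ Metric.ball 0 R) + volume (E k \ Metric.ball 0 R) := hsplit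
        _ < (ENNReal.ofReal V₀ + ENNReal.ofReal (ε / 2)) + ENNReal.ofReal (ε / 2) :=
            ENNReal.add_lt_add_of_le_of_lt (hEB.trans_lt (ENNReal.add_lt_top.2 ⟨ENNReal.ofReal_lt_top, ENNReal.ofReal_lt_top⟩)).ne hEB hcon
    rw [← ENNReal.ofReal_add (by linarith) (by linarith),
      ← ENNReal.ofReal_add (by positivity) (by linarith)] at hchain
    have : V < V₀ + ε / 2 + ε / 2 :=
      (ENNReal.ofReal_lt_ofReal_iff_of_nonneg (by linarith)).1 hchain
    simp only [hε] at this
    linarith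
  -- Step 5: energy contradiction
  obtain ⟨k, hAk, hBk⟩ := (hA.and hB).exists
  set A : Set (EuclideanSpace ℝ (Fin d)) := E k ∩ Metric.ball 0 R₀ with hAdef
  set Bs : Set (EuclideanSpace ℝ (Fin d)) := E k \ Metric.ball 0 R with hBdef
  have hAmeas : MeasurableSet A := (hmeas k).inter measurableSet_ball
  have hBsmeas : MeasurableSet Bs := (hmeas k).diff measurableSet_ball
  have key : ENNReal.ofReal (T ^ β) * volume Bs * volume A ≤ ENNReal.ofReal C := by
    refine le_trans ?_ (henergy k)
    calc ENNReal.ofReal (T ^ β) * volume Bs * volume A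
        = ∫⁻ _ in A, ENNReal.ofReal (T ^ β) * volume Bs := by
          rw [setLIntegral_const]
      _ ≤ ∫⁻ x in A, ∫⁻ y in Bs, ENNReal.ofReal (‖x - y‖ ^ β) := by
          refine setLIntegral_mono' hAmeas (fun x hx => ?_)
          rw [← setLIntegral_const]
          refine setLIntegral_mono' hBsmeas (fun y hy => ?_)
          refine ENNReal.ofReal_le_ofReal (Real.rpow_le_rpow hTpos.le ?_ hβ.le)
          have hxn : ‖x‖ < R₀ := by
            have h := hx.2; rwa [Metric.mem_ball, dist_zero_right] at h
          have hyn : R ≤ ‖y‖ := by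
            have h := hy.2
            rw [Metric.mem_ball, dist_zero_right, not_lt] at h
            exact h
          have h3 : ‖y‖ - ‖x‖ ≤ ‖x - y‖ := by
            have h := norm_sub_norm_le y x
            rwa [norm_sub_rev y x] at h
          have hRR : R = R₀ + T := hR
          linarith
      _ ≤ ∫⁻ x in A, ∫⁻ y in E k, ENNReal.ofReal (‖x - y‖ ^ β) :=
          lintegral_mono (fun x => lintegral_mono_set Set.diff_subset)
      _ ≤ ∫⁻ x in E k, ∫⁻ y in E k, ENNReal.ofReal (‖x - y‖ ^ β) :=
          lintegral_mono_set Set.inter_subset_left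
  have hTβnn : (0 : ℝ) ≤ T ^ β := Real.rpow_nonneg hTpos.le _
  have hge : ENNReal.ofReal (T ^ β * (ε / 2) * (V₀ / 4)) ≤ ENNReal.ofReal C := by
    refine le_trans ?_ key
    rw [ENNReal.ofReal_mul (by positivity), ENNReal.ofReal_mul hTβnn]
    exact mul_le_mul' (mul_le_mul' le_rfl hBk) hAk
  have hCC : C < T ^ β * (ε / 2) * (V₀ / 4) := by
    have h := mul_lt_mul_of_pos_right hTβ (show (0 : ℝ) < (ε / 2) * (V₀ / 4) by positivity)
    rw [hM, div_mul_cancel₀ C (by positivity : ((ε / 2) * (V₀ / 4)) ≠ 0)] at h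
    calc C < T ^ β * ((ε / 2) * (V₀ / 4)) := h
      _ = T ^ β * (ε / 2) * (V₀ / 4) := by ring
  exact absurd hge (not_le.2 ((ENNReal.ofReal_lt_ofReal_iff (by linarith)).2 hCC))
end
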